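/- For every symmetric 2×2 real matrix τ, Σ_{j=1}^{3} (n_jᵀ τ n_j) φ_HHJ^j = τ; in particular the Hellan–Herrmann–Johnson interpolation operator reproduces constant symmetric matrix fields on K. -/

import Mathlib

noncomputable section
open MeasureTheory

namespace PaperStmt

/-- Euclidean dot product on `ℝ²`. -/
def dotp (v w : ℝ × ℝ) : ℝ := v.1 * w.1 + v.2 * w.2

/-- Euclidean length on `ℝ²`. -/
def len (v : ℝ × ℝ) : ℝ := Real.sqrt (v.1 ^ 2 + v.2 ^ 2)

/-- Cross product (determinant) of two planar vectors. -/
def crossp (v w : ℝ × ℝ) : ℝ := v.1 * w.2 - v.2 * w.1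

/-- The vertices `p 0, p 1, p 2` form a nondegenerate triangle listed counterclockwise. -/
def Ccw (p : Fin 3 → ℝ × ℝ) : Prop := 0 < crossp (p 1 - p 0) (p 2 - p 0)

/-- Vector of the edge `e_i` opposite vertex `p i`, oriented counterclockwise
(from `p (i+1)` to `p (i−1)`). -/
def edgeVec (p : Fin 3 → ℝ × ℝ) (i : Fin 3) : ℝ × ℝ := p (i - 1) - p (i + 1)

/-- Length `|e_i|` of the edge opposite vertex `p i`. -/
def elen (p : Fin 3 → ℝ × ℝ) (i : Fin 3) : ℝ := len (edgeVec p i)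

/-- Unit tangent `t_i = (p_{i−1} − p_{i+1})/|e_i|` of edge `e_i`. -/
def tvec (p : Fin 3 → ℝ × ℝ) (i : Fin 3) : ℝ × ℝ := (elen p i)⁻¹ • edgeVec p i

/-- Outward unit normal `n_i` of edge `e_i` (clockwise rotation of the tangent,
which points outward for a counterclockwise triangle). -/
def nvec (p : Fin 3 → ℝ × ℝ) (i : Fin 3) : ℝ × ℝ := ((tvec p i).2, -(tvec p i).1)

/-- Interior angle `θ_i` of the triangle at the vertex `p i`. -/
def angleAt (p : Fin 3 → ℝ × ℝ) (i : Fin 3) : ℝ :=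
  Real.arccos (dotp (p (i + 1) - p i) (p (i - 1) - p i) /
    (len (p (i + 1) - p i) * len (p (i - 1) - p i)))

/-- Outer product `v wᵀ` of two planar (column) vectors, as a `2 × 2` matrix. -/
def outerProd (v w : ℝ × ℝ) : Matrix (Fin 2) (Fin 2) ℝ :=
  !![v.1 * w.1, v.1 * w.2; v.2 * w.1, v.2 * w.2]

/-- Basis matrices `φ_HHJ^i = −(1/(2 sin θ_{i−1} sin θ_{i+1})) (t_{i−1} t_{i+1}ᵀ + t_{i+1} t_{i−1}ᵀ)`
of the lowest-order Hellan–Herrmann–Johnson element. -/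
def phiHHJ (p : Fin 3 → ℝ × ℝ) (i : Fin 3) : Matrix (Fin 2) (Fin 2) ℝ :=
  (-(2 * Real.sin (angleAt p (i - 1)) * Real.sin (angleAt p (i + 1)))⁻¹) •
    (outerProd (tvec p (i - 1)) (tvec p (i + 1)) + outerProd (tvec p (i + 1)) (tvec p (i - 1)))

/-- The quadratic form `vᵀ τ v` of a `2 × 2` matrix on a planar vector. -/
def qf (τ : Matrix (Fin 2) (Fin 2) ℝ) (v : ℝ × ℝ) : ℝ :=
  v.1 * (τ 0 0 * v.1 + τ 0 1 * v.2) + v.2 * (τ 1 0 * v.1 + τ 1 1 * v.2)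

end PaperStmt

/-!
With `E_i = p_{i-1} - p_{i+1}` the edge vectors and `D = 2|K|`, one has
`sin θ_i = D / (|e_{i-1}| |e_{i+1}|)`, so
`φ_HHJ^i = -(|e_i|² / (2 D²)) (E_{i-1} E_{i+1}ᵀ + E_{i+1} E_{i-1}ᵀ)`, while `n_i = E_i^⊥ / |e_i|`.
The edge lengths cancel, and what remains is a polynomial identity in the edge vectors,
which close up (`E_0 + E_1 + E_2 = 0`) and satisfy `E_0 × E_1 = D`.
-/

namespace PaperStmt

def rotCW (v : ℝ × ℝ) : ℝ × ℝ := (v.2, -v.1)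

def twiceArea (p : Fin 3 → ℝ × ℝ) : ℝ := crossp (p 1 - p 0) (p 2 - p 0)

lemma len_sq (v : ℝ × ℝ) : len v ^ 2 = v.1 ^ 2 + v.2 ^ 2 := Real.sq_sqrt (by positivity)

lemma len_pos {v : ℝ × ℝ} (hv : v ≠ 0) : 0 < len v := by
  refine Real.sqrt_pos.2 ?_
  rcases v with ⟨x, y⟩
  by_cases hx : x = 0
  · have hy : y ≠ 0 := fun hy => hv (by simp [hx, hy])
    positivity
  · positivity

lemma len_neg (v : ℝ × ℝ) : len (-v) = len v := by
  simp [len]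

lemma dotp_sq_add_crossp_sq (u v : ℝ × ℝ) :
    dotp u v ^ 2 + crossp u v ^ 2 = (len u * len v) ^ 2 := by
  rw [mul_pow, len_sq, len_sq, dotp, crossp]; ring

lemma sin_arccos_dotp_div {u v : ℝ × ℝ} (hu : u ≠ 0) (hv : v ≠ 0) :
    Real.sin (Real.arccos (dotp u v / (len u * len v))) = |crossp u v| / (len u * len v) := by
  have hu' := len_pos hu
  have hv' := len_pos hv
  have hsq : 1 - (dotp u v / (len u * len v)) ^ 2 = (crossp u v / (len u * len v)) ^ 2 := by
    field_simp
    linarith [dotp_sq_add_crossp_sq u v]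
  rw [Real.sin_arccos, hsq, Real.sqrt_sq_eq_abs, abs_div, abs_of_pos (mul_pos hu' hv')]

lemma qf_smul (τ : Matrix (Fin 2) (Fin 2) ℝ) (c : ℝ) (v : ℝ × ℝ) :
    qf τ (c • v) = c ^ 2 * qf τ v := by
  simp only [qf, Prod.smul_fst, Prod.smul_snd, smul_eq_mul]; ring

lemma outerProd_smul_smul (a b : ℝ) (v w : ℝ × ℝ) :
    outerProd (a • v) (b • w) = (a * b) • outerProd v w := by
  ext i j
  fin_cases i <;> fin_cases j <;> simp [outerProd] <;> ring

lemma qf_rotCW_smul_outerProd_sum {a b c : ℝ × ℝ} (habc : a + b + c = 0)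
    {τ : Matrix (Fin 2) (Fin 2) ℝ} (hτ : τ.IsSymm) :
    qf τ (rotCW a) • (outerProd c b + outerProd b c) +
      qf τ (rotCW b) • (outerProd a c + outerProd c a) +
      qf τ (rotCW c) • (outerProd b a + outerProd a b) = (-2 * crossp a b ^ 2) • τ := by
  obtain rfl : c = -(a + b) := eq_neg_of_add_eq_zero_right habc
  have h10 : τ 1 0 = τ 0 1 := hτ.apply 0 1
  ext i j
  fin_cases i <;> fin_cases j <;> simp [qf, rotCW, outerProd, crossp, h10] <;> ring

section Triangle

variable (p : Fin 3 → ℝ × ℝ)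

lemma edgeVec_sum : edgeVec p 0 + edgeVec p 1 + edgeVec p 2 = 0 := by
  change (p 2 - p 1) + (p 0 - p 2) + (p 1 - p 0) = 0
  abel

lemma crossp_edgeVec (i : Fin 3) : crossp (edgeVec p i) (edgeVec p (i + 1)) = twiceArea p := by
  fin_cases i <;> simp [edgeVec, crossp, twiceArea, show (-1 : Fin 3) = 2 from rfl] <;> ring

lemma crossp_sub_vertex (i : Fin 3) :
    crossp (p (i + 1) - p i) (p (i - 1) - p i) = twiceArea p := by
  fin_cases i <;> simp [crossp, twiceArea, show (-1 : Fin 3) = 2 from rfl] <;> ring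

lemma len_sub_vertex_succ (i : Fin 3) : len (p (i + 1) - p i) = elen p (i - 1) := by
  fin_cases i <;> rfl

lemma len_sub_vertex_pred (i : Fin 3) : len (p (i - 1) - p i) = elen p (i + 1) := by
  rw [← len_neg, neg_sub]; fin_cases i <;> rfl

variable {p}

lemma twiceArea_pos (hp : Ccw p) : 0 < twiceArea p := hp

lemma edgeVec_ne_zero (hp : Ccw p) (i : Fin 3) : edgeVec p i ≠ 0 :=
  fun h => (twiceArea_pos hp).ne' (by rw [← crossp_edgeVec p i, h]; simp [crossp])

lemma elen_pos (hp : Ccw p) (i : Fin 3) : 0 < elen p i := len_pos (edgeVec_ne_zero hp i)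

lemma sin_angleAt (hp : Ccw p) (i : Fin 3) :
    Real.sin (angleAt p i) = twiceArea p / (elen p (i - 1) * elen p (i + 1)) := by
  have hne : ∀ {v : ℝ × ℝ} {j : Fin 3}, len v = elen p j → v ≠ 0 := fun hv h0 =>
    (elen_pos hp _).ne' (by rw [← hv, h0]; simp [len])
  rw [angleAt, sin_arccos_dotp_div (hne (len_sub_vertex_succ p i)) (hne (len_sub_vertex_pred p i)),
    crossp_sub_vertex, abs_of_pos (twiceArea_pos hp), len_sub_vertex_succ, len_sub_vertex_pred]

lemma phiHHJ_eq (hp : Ccw p) (i : Fin 3) :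
    phiHHJ p i = (-(elen p i ^ 2 / (2 * twiceArea p ^ 2))) •
      (outerProd (edgeVec p (i - 1)) (edgeVec p (i + 1)) +
        outerProd (edgeVec p (i + 1)) (edgeVec p (i - 1))) := by
  have hsin_pred : Real.sin (angleAt p (i - 1)) = twiceArea p / (elen p (i + 1) * elen p i) := by
    rw [sin_angleAt hp, show i - 1 - 1 = i + 1 by fin_cases i <;> rfl, sub_add_cancel]
  have hsin_succ : Real.sin (angleAt p (i + 1)) = twiceArea p / (elen p i * elen p (i - 1)) := by
    rw [sin_angleAt hp, add_sub_cancel_right, show i + 1 + 1 = i - 1 by fin_cases i <;> rfl]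
  have hD := (twiceArea_pos hp).ne'
  have hi := (elen_pos hp i).ne'
  have hpred := (elen_pos hp (i - 1)).ne'
  have hsucc := (elen_pos hp (i + 1)).ne'
  rw [phiHHJ, hsin_pred, hsin_succ, tvec, tvec, outerProd_smul_smul, outerProd_smul_smul,
    mul_comm (elen p (i + 1))⁻¹, ← smul_add, smul_smul]
  congr 1
  field_simp

lemma nvec_eq (i : Fin 3) : nvec p i = (elen p i)⁻¹ • rotCW (edgeVec p i) := by
  ext <;> simp [nvec, tvec, rotCW]

end Triangle

end PaperStmt

open PaperStmt in
/-- The HHJ interpolation reproduces constant symmetric matrix fields: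
`Σ_{j=1}^{3} (n_jᵀ τ n_j) φ_HHJ^j = τ` for every symmetric `2 × 2` matrix `τ`. -/
theorem HHJ_reproduces_constants (p : Fin 3 → ℝ × ℝ) (hp : Ccw p)
    (τ : Matrix (Fin 2) (Fin 2) ℝ) (hτ : τ.IsSymm) :
    ∑ j : Fin 3, qf τ (nvec p j) • phiHHJ p j = τ := by
  have hD := (twiceArea_pos hp).ne'
  have hterm : ∀ j, qf τ (nvec p j) • phiHHJ p j = (-(2 * twiceArea p ^ 2)⁻¹) •
      (qf τ (rotCW (edgeVec p j)) • (outerProd (edgeVec p (j - 1)) (edgeVec p (j + 1)) +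
        outerProd (edgeVec p (j + 1)) (edgeVec p (j - 1)))) := by
    intro j
    have hj := (elen_pos hp j).ne'
    rw [nvec_eq, qf_smul, phiHHJ_eq hp, smul_smul, smul_smul]
    congr 1
    field_simp
  simp only [hterm, ← Finset.smul_sum, Fin.sum_univ_three, Fin.isValue, Fin.reduceSub, Fin.reduceAdd]
  rw [qf_rotCW_smul_outerProd_sum (edgeVec_sum p) hτ,
    show crossp (edgeVec p 0) (edgeVec p 1) = twiceArea p from crossp_edgeVec p 0, smul_smul]
  convert one_smul ℝ τ
  field_simp
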